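/- Let (I, ≤) be a directed set, (h_i), (k_i) directed systems of division rings with transition maps ψ_{ij}, φ_{ij}, compatible embeddings f_i : k_i → h_i, and a profinite group G with isomorphisms ω_i : G → Gal(h_i/k_i) satisfying ψ_{ij}(ω_i(σ)(x)) = ω_j(σ)(ψ_{ij}(x)) for all i ≤ j, σ ∈ G, x ∈ h_i. Suppose each h_i/k_i is an algebraic outer Galois extension. Then setting h = colim h_i and k = colim k_i, the extension h/k is an algebraic outer Galois extension with Gal(h/k) ≅ G, compatibly with the ω_i. -/

import Mathlib

/-!
Gluing the `ωᵢ` gives one action of `G` on `h` by ring automorphisms, with fixed field `⋃ kᵢ`,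
open stabilizers, and outer (every unit centralizing the fixed field is central); the rest is
Galois theory for such an action of a compact group on a division ring `D` with fixed field `K`.

If an open subgroup `U`, of finite index `n`, fixes a set `C`, a minimal-support argument (Artin)
shows that more than `n` elements of `C` are left `K`-dependent; so `C` is spanned over `K` by at
most `n` elements, on the left and, passing to `Dᵐᵒᵖ`, on the right. This is algebraicity.

Given a ring endomorphism `f` fixing `K` and a finite set `s`, let `C` be generated by `s` and `K`
and `U` its fixing subgroup. Outerness gives Dedekind independence of the `n` coset
representatives on `C` with coefficients in `D`; as `C` is right-spanned by at most `n` elements,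
`f` is a left `D`-combination of them on `C`, and multiplicativity of `f` leaves a single term.
Compactness of `G` then turns agreement on every finite set into agreement everywhere.
-/

/-- `x` is algebraic over the subset `k` of the division ring `h`. -/
def IsAlgebraicOverSet {h : Type*} [DivisionRing h] (k : Set h) (x : h) : Prop :=
  ∃ (N : ℕ) (b : Fin N → h),
    (∀ y ∈ Subfield.closure (insert x k), ∃ c : Fin N → h,
      (∀ i, c i ∈ k) ∧ y = ∑ i, c i * b i) ∧
    (∀ y ∈ Subfield.closure (insert x k), ∃ c : Fin N → h,
      (∀ i, c i ∈ k) ∧ y = ∑ i, b i * c i)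

open MulAction MulOpposite
open scoped Matrix

namespace Matrix

variable {E m n : Type*} [DivisionRing E] [Fintype m] [Fintype n]

theorem exists_ne_zero_vecMul_eq_zero_of_card_lt (M : Matrix m n E)
    (hcard : Fintype.card n < Fintype.card m) : ∃ a ≠ 0, a ᵥ* M = 0 := by
  obtain ⟨a, ha, ha0⟩ := Submodule.exists_mem_ne_zero_of_ne_bot
    (LinearMap.ker_ne_bot_of_finrank_lt (f := M.vecMulLinear) (by simpa using hcard))
  exact ⟨a, ha0, ha⟩

theorem vecMul_surjective_of_injective (M : Matrix m n E)
    (hcard : Fintype.card n ≤ Fintype.card m) (hM : Function.Injective M.vecMul) :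
    Function.Surjective M.vecMul := by
  have hle := LinearMap.finrank_le_finrank_of_injective (f := M.vecMulLinear) hM
  simp only [Module.finrank_fintype_fun_eq_card] at hle
  exact (LinearMap.injective_iff_surjective_of_finrank_eq_finrank (f := M.vecMulLinear)
    (by simp only [Module.finrank_fintype_fun_eq_card]; omega)).1 hM

end Matrix

theorem exists_eq_one_minimal_support {ι D : Type*} [Finite ι] [DivisionRing D]
    {S : Set (ι → D)} (hsmul : ∀ c : D, ∀ w ∈ S, c • w ∈ S) (hS : ∃ w ∈ S, w ≠ 0) :
    ∃ w ∈ S, ∃ i₀, w i₀ = 1 ∧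
      ∀ v ∈ S, v i₀ = 0 → (∀ i, w i = 0 → v i = 0) → v = 0 := by
  obtain ⟨_, ⟨w, ⟨hwS, hw0⟩, rfl⟩, hmin⟩ := wellFounded_lt.has_min
    (Function.support '' {w | w ∈ S ∧ w ≠ 0}) (let ⟨w, hw⟩ := hS; ⟨_, w, hw, rfl⟩)
  obtain ⟨i₀, hi₀⟩ := Function.ne_iff.1 hw0
  refine ⟨(w i₀)⁻¹ • w, hsmul _ w hwS, i₀, inv_mul_cancel₀ hi₀, fun v hvS hvi₀ hvw => ?_⟩
  by_contra hv0
  refine hmin _ ⟨v, ⟨hvS, hv0⟩, rfl⟩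
    ((Set.ssubset_iff_of_subset fun i hi => ?_).2 ⟨i₀, hi₀, Function.notMem_support.2 hvi₀⟩)
  contrapose hi
  simp_all [Function.mem_support]

section FixedVectors

variable {G D ι : Type*} [Monoid G] [DivisionRing D] [MulSemiringAction G D] [Finite ι]

theorem Submodule.exists_ne_zero_forall_smul_eq (S : Submodule D (ι → D))
    (hS : ∀ σ : G, ∀ a ∈ S, σ • a ∈ S) (hne : S ≠ ⊥) :
    ∃ a ∈ S, a ≠ 0 ∧ ∀ σ : G, σ • a = a := by
  obtain ⟨a, haS, i₀, ha₀, hmin⟩ := exists_eq_one_minimal_support (S := (S : Set (ι → D)))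
    (fun c w hw => S.smul_mem c hw) (Submodule.exists_mem_ne_zero_of_ne_bot hne)
  refine ⟨a, haS, fun h => by simp [h] at ha₀, fun σ => ?_⟩
  refine sub_eq_zero.1 (hmin _ (S.sub_mem (hS σ a haS) haS) (by simp [ha₀]) fun i hi => ?_)
  simp [hi]

end FixedVectors

instance MulOpposite.instMulSemiringAction {M R : Type*} [Monoid M] [Semiring R]
    [MulSemiringAction M R] : MulSemiringAction M Rᵐᵒᵖ where
  __ := MulOpposite.instDistribMulAction
  __ := MulOpposite.instMulDistribMulAction

theorem exists_fin_span_of_forall_linearIndependent_le {K V : Type*} [DivisionRing K]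
    [AddCommGroup V] [Module K V] {C : Set V} {n : ℕ}
    (hC : ∀ {r} (y : Fin r → V), (∀ i, y i ∈ C) → LinearIndependent K y → r ≤ n) :
    ∃ d ≤ n, ∃ b : Fin d → V, C ⊆ Submodule.span K (Set.range b) := by
  obtain ⟨s, hsC, hspan, hli⟩ := exists_linearIndependent K C
  have hfin : s.Finite := by
    by_contra hinf
    let e := Set.Infinite.natEmbedding s hinf
    have := hC (fun i : Fin (n + 1) => (e i : V)) (fun i => hsC (e i).2)
      (hli.comp _ (e.injective.comp Fin.val_injective))
    omega
  have := hfin.fintype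
  let e := Fintype.equivFin s
  refine ⟨Fintype.card s, hC _ (fun i => hsC (e.symm i).2) (hli.comp _ e.symm.injective),
    fun i => e.symm i, ?_⟩
  rw [Set.range_comp' Subtype.val, e.symm.range_eq_univ, Set.image_univ, Subtype.range_coe, hspan]
  exact Submodule.subset_span

section FixedSubfield

variable (G D : Type*) [Monoid G] [DivisionRing D] [MulSemiringAction G D]

def fixedSubfield : Subfield D where
  carrier := fixedPoints G D
  zero_mem' := smul_zero
  add_mem' hx hy σ := by rw [smul_add, hx σ, hy σ]
  neg_mem' hx σ := by rw [smul_neg, hx σ]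
  one_mem' := smul_one
  mul_mem' hx hy σ := by rw [smul_mul', hx σ, hy σ]
  inv_mem' x hx σ := by rw [smul_inv'', hx σ]

variable {G D}

theorem smul_eq_self_of_mem_closure {σ : G} {S : Set D} (hS : ∀ z ∈ S, σ • z = z) {z : D}
    (hz : z ∈ Subfield.closure S) : σ • z = z :=
  RingHom.eqOn_field_closure (f := MulSemiringAction.toRingHom G D σ) (g := RingHom.id D) hS hz

end FixedSubfield

section Artin

variable {G D : Type*} [Group G] [DivisionRing D] [MulSemiringAction G D]

theorem QuotientGroup.out_mk_smul_of_le_stabilizer {X : Type*} [MulAction G X] {U : Subgroup G}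
    {x : X} (hx : U ≤ stabilizer G x) (σ : G) : (σ : G ⧸ U).out • x = σ • x := by
  obtain ⟨u, hu⟩ := QuotientGroup.mk_out_eq_mul U σ
  rw [hu, mul_smul, hx u.2]

/-- Artin's lemma. -/
theorem LinearIndependent.card_le_index_of_le_fixingSubgroup (U : Subgroup G) [Finite (G ⧸ U)]
    {C : Set D} (hC : U ≤ fixingSubgroup G C) {ι : Type*} [Fintype ι] {y : ι → D}
    (hy : ∀ i, y i ∈ C) (hli : LinearIndependent (fixedSubfield G D) y) :
    Fintype.card ι ≤ Nat.card (G ⧸ U) := by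
  have := Fintype.ofFinite (G ⧸ U)
  by_contra! hcard
  -- Indexing columns by all of `G` makes the kernel `G`-stable; by `hC` only `[G : U]` differ.
  let N : Matrix ι G D := Matrix.of fun i σ => σ • y i
  have hstable : ∀ τ : G, ∀ a ∈ LinearMap.ker N.vecMulLinear,
      τ • a ∈ LinearMap.ker N.vecMulLinear := by
    intro τ a ha
    simp only [LinearMap.mem_ker, Matrix.vecMulLinear_apply] at ha ⊢
    ext σ
    have := congrFun ha (τ⁻¹ * σ)
    simp only [Matrix.vecMul, dotProduct, N, Matrix.of_apply, Pi.zero_apply] at this ⊢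
    simpa [Finset.smul_sum, smul_mul', mul_smul, smul_inv_smul] using congrArg (τ • ·) this
  have hne : LinearMap.ker N.vecMulLinear ≠ ⊥ := by
    obtain ⟨a, ha0, ha⟩ := (Matrix.of fun i (q : G ⧸ U) => q.out • y i)
      |>.exists_ne_zero_vecMul_eq_zero_of_card_lt (by rwa [Nat.card_eq_fintype_card] at hcard)
    refine (Submodule.ne_bot_iff _).2 ⟨a, ?_, ha0⟩
    ext σ
    have := congrFun ha σ
    simpa [Matrix.vecMul, dotProduct, N,
      QuotientGroup.out_mk_smul_of_le_stabilizer
        fun u hu => (mem_fixingSubgroup_iff G).1 (hC hu) _ (hy _)] using this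
  obtain ⟨a, ha, ha0, hfix⟩ := Submodule.exists_ne_zero_forall_smul_eq _ hstable hne
  refine ha0 (funext fun i => ?_)
  have := Fintype.linearIndependent_iff.1 hli (fun i => ⟨a i, fun σ => congrFun (hfix σ) i⟩)
    (by simpa [Matrix.vecMul, dotProduct, N, Subfield.smul_def] using congrFun ha 1) i
  simpa using congrArg Subtype.val this

end Artin

section Span

variable {G D : Type*} [Group G] [DivisionRing D] [MulSemiringAction G D]

theorem exists_left_span_of_le_fixingSubgroup (U : Subgroup G) [Finite (G ⧸ U)] {C : Set D}
    (hC : U ≤ fixingSubgroup G C) :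
    ∃ d ≤ Nat.card (G ⧸ U), ∃ b : Fin d → D, ∀ z ∈ C,
      ∃ c : Fin d → D, (∀ l, c l ∈ fixedPoints G D) ∧ z = ∑ l, c l * b l := by
  obtain ⟨d, hd, b, hb⟩ :=
    exists_fin_span_of_forall_linearIndependent_le (K := fixedSubfield G D) (C := C) fun y hy hli => by simpa using hli.card_le_index_of_le_fixingSubgroup U hC hy
  refine ⟨d, hd, b, fun z hz => ?_⟩
  obtain ⟨c, hc⟩ := (Submodule.mem_span_range_iff_exists_fun _).1 (hb hz)
  exact ⟨fun l => c l, fun l => (c l).2, hc.symm⟩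

theorem exists_right_span_of_le_fixingSubgroup (U : Subgroup G) [Finite (G ⧸ U)] {C : Set D}
    (hC : U ≤ fixingSubgroup G C) :
    ∃ d ≤ Nat.card (G ⧸ U), ∃ b : Fin d → D, ∀ z ∈ C,
      ∃ c : Fin d → D, (∀ l, c l ∈ fixedPoints G D) ∧ z = ∑ l, b l * c l := by
  obtain ⟨d, hd, b, hb⟩ := exists_left_span_of_le_fixingSubgroup U (C := unop ⁻¹' C)
    fun u hu => (mem_fixingSubgroup_iff G).2 fun z hz =>
      unop_injective (by rw [unop_smul, (mem_fixingSubgroup_iff G).1 (hC hu) _ hz])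
  refine ⟨d, hd, unop ∘ b, fun z hz => ?_⟩
  obtain ⟨c, hc, hz⟩ := hb (op z) hz
  refine ⟨unop ∘ c, fun l σ => by rw [Function.comp_apply, ← unop_smul, hc l σ], ?_⟩
  simpa using congrArg unop hz

end Span

theorem isAlgebraicOverSet_of_exists_span {D : Type*} [DivisionRing D] {k : Set D} {x : D}
    (hk : (0 : D) ∈ k)
    (hleft : ∃ (N : ℕ) (b : Fin N → D), ∀ y ∈ Subfield.closure (insert x k),
      ∃ c : Fin N → D, (∀ i, c i ∈ k) ∧ y = ∑ i, c i * b i)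
    (hright : ∃ (N : ℕ) (b : Fin N → D), ∀ y ∈ Subfield.closure (insert x k),
      ∃ c : Fin N → D, (∀ i, c i ∈ k) ∧ y = ∑ i, b i * c i) :
    IsAlgebraicOverSet k x := by
  obtain ⟨L, bL, hL⟩ := hleft
  obtain ⟨R, bR, hR⟩ := hright
  refine ⟨L + R, Fin.append bL bR, fun y hy => ?_, fun y hy => ?_⟩
  · obtain ⟨c, hc, rfl⟩ := hL y hy
    refine ⟨Fin.append c 0,
      fun i => Fin.addCases (by simpa using hc) (fun _ => by simpa using hk) i, ?_⟩
    simp [Fin.sum_univ_add]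
  · obtain ⟨c, hc, rfl⟩ := hR y hy
    refine ⟨Fin.append 0 c,
      fun i => Fin.addCases (fun _ => by simpa using hk) (by simpa using hc) i, ?_⟩
    simp [Fin.sum_univ_add]

section Dedekind

variable {D Q F : Type*} [DivisionRing D] [Fintype Q] [FunLike F D D] {K : Set D}
  {C : Submonoid D} {g : Q → F}

theorem eq_zero_of_forall_sum_mul_apply_eq_zero [MonoidHomClass F D D]
    (hout : K.centralizer ⊆ Set.center D) (hKC : K ⊆ C) (hgK : ∀ q, ∀ c ∈ K, g q c = c)
    (hg : ∀ q q', Set.EqOn (g q) (g q') C → q = q') {a : Q → D}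
    (ha : ∀ z ∈ C, ∑ q, a q * g q z = 0) : a = 0 := by
  by_contra ha0
  obtain ⟨w, hwS, q₀, hw₀, hmin⟩ := exists_eq_one_minimal_support
    (S := {w | ∀ z ∈ C, ∑ q, w q * g q z = 0})
    (fun c w hw z hz => by simp [mul_assoc, ← Finset.mul_sum, hw z hz]) ⟨a, ha, ha0⟩
  have hshift : ∀ y ∈ C, ∀ q, w q * g q y = g q₀ y * w q := by
    intro y hy
    have := hmin (fun q => w q * g q y - g q₀ y * w q) (fun z hz => ?_) (by simp [hw₀])
      (fun q hq => by simp [hq])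
    · intro q
      simpa [sub_eq_zero] using congrFun this q
    simp only [sub_mul, Finset.sum_sub_distrib, mul_assoc, ← map_mul, ← Finset.mul_sum,
      hwS _ (C.mul_mem hy hz), hwS z hz, mul_zero, sub_zero]
  have hsupp : ∀ q, w q ≠ 0 → q = q₀ := by
    intro q hq
    have hcentral : w q ∈ Set.center D :=
      hout fun c hc => by simpa [hgK _ c hc] using (hshift c (hKC hc) q).symm
    refine hg q q₀ fun y hy => mul_left_cancel₀ hq ?_
    rw [hshift y hy, Semigroup.mem_center_iff.1 hcentral]
  have h1 := hwS 1 C.one_mem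
  simp only [map_one, mul_one] at h1
  rw [Finset.sum_eq_single q₀ (fun q _ hq => by_contra fun h => hq (hsupp q h))
    (by simp), hw₀] at h1
  exact one_ne_zero h1

theorem exists_eqOn_of_forall_eq_sum_mul [MonoidHomClass F D D]
    (hout : K.centralizer ⊆ Set.center D) (hKC : K ⊆ C) (hgK : ∀ q, ∀ c ∈ K, g q c = c)
    (hg : ∀ q q', Set.EqOn (g q) (g q') C → q = q') {f : F} (hfK : ∀ c ∈ K, f c = c)
    {a : Q → D} (hfa : ∀ z ∈ C, f z = ∑ q, a q * g q z) : ∃ q, Set.EqOn f (g q) C := by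
  have hrel : ∀ y ∈ C, ∀ q, a q * g q y = f y * a q := by
    intro y hy
    have := eq_zero_of_forall_sum_mul_apply_eq_zero hout hKC hgK hg
      (a := fun q => a q * g q y - f y * a q) fun z hz => ?_
    · intro q
      simpa [sub_eq_zero] using congrFun this q
    have hyz := hfa _ (C.mul_mem hy hz)
    simp only [map_mul] at hyz
    simp only [sub_mul, Finset.sum_sub_distrib, mul_assoc, ← Finset.mul_sum, ← hfa z hz, ← hyz,
      sub_self]
  obtain ⟨q, hq⟩ : ∃ q, a q ≠ 0 := by
    by_contra! h
    simpa [h] using hfa 1 C.one_mem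
  have hcentral : a q ∈ Set.center D :=
    hout fun c hc => by simpa [hgK q c hc, hfK c hc] using (hrel c (hKC hc) q).symm
  refine ⟨q, fun y hy => (mul_left_cancel₀ hq ?_).symm⟩
  rw [hrel y hy, Semigroup.mem_center_iff.1 hcentral]

theorem sum_mul_apply_sum_mul_eq_sum_vecMul_mul [RingHomClass F D D]
    (hgK : ∀ q, ∀ c ∈ K, g q c = c) (w : Q → D) {d : ℕ} (b : Fin d → D) {c : Fin d → D}
    (hc : ∀ l, c l ∈ K) :
    ∑ q, w q * g q (∑ l, b l * c l) = ∑ l, (w ᵥ* Matrix.of fun q l => g q (b l)) l * c l := by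
  simp only [map_sum, map_mul, hgK _ _ (hc _), Matrix.vecMul, dotProduct, Matrix.of_apply,
    Finset.mul_sum, Finset.sum_mul, mul_assoc]
  exact Finset.sum_comm

theorem exists_forall_eq_sum_mul_apply [RingHomClass F D D]
    (hout : K.centralizer ⊆ Set.center D) (hKC : K ⊆ C) (hgK : ∀ q, ∀ c ∈ K, g q c = c)
    (hg : ∀ q q', Set.EqOn (g q) (g q') C → q = q') {d : ℕ} (hd : d ≤ Fintype.card Q)
    {b : Fin d → D} (hb : ∀ z ∈ C, ∃ c : Fin d → D, (∀ l, c l ∈ K) ∧ z = ∑ l, b l * c l)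
    {f : F} (hfK : ∀ c ∈ K, f c = c) : ∃ a : Q → D, ∀ z ∈ C, f z = ∑ q, a q * g q z := by
  set M : Matrix Q (Fin d) D := Matrix.of fun q l => g q (b l)
  have hinj : Function.Injective M.vecMul := by
    refine (injective_iff_map_eq_zero M.vecMulLinear).2 fun w hw => ?_
    refine eq_zero_of_forall_sum_mul_apply_eq_zero hout hKC hgK hg fun z hz => ?_
    obtain ⟨c, hc, rfl⟩ := hb z hz
    rw [sum_mul_apply_sum_mul_eq_sum_vecMul_mul hgK w b hc]
    simp [M, ← Matrix.vecMulLinear_apply, hw]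
  obtain ⟨a, ha⟩ := M.vecMul_surjective_of_injective (by simpa using hd) hinj (f ∘ b)
  change a ᵥ* M = f ∘ b at ha
  refine ⟨a, fun z hz => ?_⟩
  obtain ⟨c, hc, rfl⟩ := hb z hz
  rw [sum_mul_apply_sum_mul_eq_sum_vecMul_mul hgK a b hc, ha]
  simp [map_sum, hfK _ (hc _)]

end Dedekind

section Compactness

variable {G X : Type*} [Group G] [TopologicalSpace G] [SeparatelyContinuousMul G] [MulAction G X]

theorem isLocallyConstant_smul_of_isOpen_stabilizer {x : X}
    (hx : IsOpen (stabilizer G x : Set G)) : IsLocallyConstant fun σ : G => σ • x := by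
  refine (IsLocallyConstant.iff_exists_open _).2 fun σ =>
    ⟨(σ⁻¹ * ·) ⁻¹' stabilizer G x, hx.preimage (continuous_const_mul _), by simp, fun τ hτ => ?_⟩
  calc τ • x = σ • (σ⁻¹ * τ) • x := by rw [smul_smul, mul_inv_cancel_left]
    _ = σ • x := by rw [mem_stabilizer_iff.1 hτ]

theorem exists_smul_eq_of_forall_finset [CompactSpace G]
    (hopen : ∀ x : X, IsOpen (stabilizer G x : Set G)) {f : X → X}
    (hf : ∀ s : Finset X, ∃ σ : G, ∀ x ∈ s, f x = σ • x) : ∃ σ : G, ∀ x, f x = σ • x := by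
  obtain ⟨σ, -, hσ⟩ := isCompact_univ.inter_iInter_nonempty (fun x => {σ : G | σ • x = f x})
    (fun x => (isLocallyConstant_smul_of_isOpen_stabilizer (hopen x)).isClosed_fiber _)
    fun s => let ⟨σ, hσ⟩ := hf s; ⟨σ, trivial, Set.mem_iInter₂.2 fun x hx => (hσ x hx).symm⟩
  exact ⟨σ, fun x => (Set.mem_iInter.1 hσ x).symm⟩

end Compactness

section Galois

variable {G D : Type*} [Group G] [TopologicalSpace G] [SeparatelyContinuousMul G]
  [CompactSpace G] [DivisionRing D] [MulSemiringAction G D]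

theorem isAlgebraicOverSet_fixedPoints (hopen : ∀ x : D, IsOpen (stabilizer G x : Set G))
    (x : D) : IsAlgebraicOverSet (fixedPoints G D) x := by
  have := Subgroup.quotient_finite_of_isOpen _ (hopen x)
  have hC : stabilizer G x ≤
      fixingSubgroup G (Subfield.closure (insert x (fixedPoints G D)) : Set D) :=
    fun u hu => (mem_fixingSubgroup_iff G).2 fun _ =>
      smul_eq_self_of_mem_closure (by rintro c (rfl | hc); exacts [hu, hc u])
  obtain ⟨_, -, bL, hL⟩ := exists_left_span_of_le_fixingSubgroup _ hC
  obtain ⟨_, -, bR, hR⟩ := exists_right_span_of_le_fixingSubgroup _ hC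
  exact isAlgebraicOverSet_of_exists_span (fun σ => smul_zero σ) ⟨_, bL, hL⟩ ⟨_, bR, hR⟩

theorem exists_smul_eqOn_finset_of_ringHom (hopen : ∀ x : D, IsOpen (stabilizer G x : Set G))
    (hout : (fixedPoints G D).centralizer ⊆ Set.center D) {f : D →+* D}
    (hf : ∀ c ∈ fixedPoints G D, f c = c) (s : Finset D) : ∃ σ : G, ∀ z ∈ s, f z = σ • z := by
  set C := Subfield.closure ((s : Set D) ∪ fixedPoints G D)
  set U := fixingSubgroup G (C : Set D)
  have hsU : fixingSubgroup G (s : Set D) ≤ U := fun u hu =>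
    (mem_fixingSubgroup_iff G).2 fun z => smul_eq_self_of_mem_closure
      (by rintro c (hc | hc); exacts [(mem_fixingSubgroup_iff G).1 hu c hc, hc u])
  have hsopen : IsOpen (fixingSubgroup G (s : Set D) : Set G) := by
    have : (fixingSubgroup G (s : Set D) : Set G) = ⋂ z ∈ s, (stabilizer G z : Set G) := by
      ext; simp [mem_fixingSubgroup_iff]
    rw [this]
    exact isOpen_biInter_finset fun z _ => hopen z
  have := Subgroup.quotient_finite_of_isOpen U (Subgroup.isOpen_mono hsU hsopen)
  have := Fintype.ofFinite (G ⧸ U)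
  obtain ⟨d, hd, b, hb⟩ := exists_right_span_of_le_fixingSubgroup U le_rfl
  let g : G ⧸ U → D →+* D := fun q => MulSemiringAction.toRingHom G D q.out
  have hKC : fixedPoints G D ⊆ C.toSubmonoid := fun c hc => Subfield.subset_closure (Or.inr hc)
  have hgK : ∀ q, ∀ c ∈ fixedPoints G D, g q c = c := fun q c hc => hc _
  have hg : ∀ q q', Set.EqOn (g q) (g q') C.toSubmonoid → q = q' := by
    intro q q' hqq'
    rw [← QuotientGroup.out_eq' q, ← QuotientGroup.out_eq' q', eq_comm, QuotientGroup.eq]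
    refine (mem_fixingSubgroup_iff G).2 fun z hz => ?_
    have : q.out • z = q'.out • z := hqq' hz
    rw [mul_smul, this, inv_smul_smul]
  obtain ⟨a, ha⟩ := exists_forall_eq_sum_mul_apply hout hKC hgK hg
    (by rwa [Nat.card_eq_fintype_card] at hd) hb hf
  obtain ⟨q, hq⟩ := exists_eqOn_of_forall_eq_sum_mul hout hKC hgK hg hf ha
  exact ⟨q.out, fun z hz => hq (Subfield.subset_closure (Or.inl hz))⟩

theorem exists_smul_eq_of_ringHom (hopen : ∀ x : D, IsOpen (stabilizer G x : Set G))
    (hout : (fixedPoints G D).centralizer ⊆ Set.center D) {f : D →+* D}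
    (hf : ∀ c ∈ fixedPoints G D, f c = c) : ∃ σ : G, ∀ x, f x = σ • x :=
  exists_smul_eq_of_forall_finset hopen (exists_smul_eqOn_finset_of_ringHom hopen hout hf)

end Galois

section ActionExtension

variable {I G h : Type*} [Group G] [DivisionRing h] [MulAction G h] {hs ks : I → Subfield h}
  {ω : I → G → h → h}

theorem fixedPoints_eq_of_forall_smul_eq
    (hsmul : ∀ (σ : G) i, ∀ x ∈ hs i, σ • x = ω i σ x) (hcover : ∀ x : h, ∃ i, x ∈ hs i)
    (hks : ∀ i, ks i ≤ hs i) (hfix : ∀ i, ∀ x ∈ hs i, (∀ σ : G, ω i σ x = x) ↔ x ∈ ks i) :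
    fixedPoints G h = {y | ∃ i, y ∈ ks i} := by
  ext x
  constructor
  · intro hx
    obtain ⟨i, hi⟩ := hcover x
    exact ⟨i, (hfix i x hi).1 fun σ => (hsmul σ i x hi).symm.trans (hx σ)⟩
  · rintro ⟨i, hi⟩ σ
    exact (hsmul σ i x (hks i hi)).trans ((hfix i x (hks i hi)).2 hi σ)

theorem isOpen_stabilizer_of_forall_smul_eq [TopologicalSpace G]
    (hsmul : ∀ (σ : G) i, ∀ x ∈ hs i, σ • x = ω i σ x) (hcover : ∀ x : h, ∃ i, x ∈ hs i)
    (hopen : ∀ i, ∀ x ∈ hs i, IsOpen {σ : G | ω i σ x = x}) (x : h) :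
    IsOpen (stabilizer G x : Set G) := by
  obtain ⟨i, hi⟩ := hcover x
  convert hopen i x hi using 1
  ext σ
  change σ • x = x ↔ ω i σ x = x
  rw [hsmul σ i x hi]

end ActionExtension

section DirectedLimit

variable {I G h : Type*} [Preorder I] [IsDirected I (· ≤ ·)] [DivisionRing h]
  {hs ks : I → Subfield h} {ω : I → G → h → h}

theorem exists_mem_mem_of_monotone (hmono : Monotone hs) (hcover : ∀ x : h, ∃ i, x ∈ hs i)
    (x y : h) : ∃ i, x ∈ hs i ∧ y ∈ hs i := by
  obtain ⟨i, hi⟩ := hcover x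
  obtain ⟨j, hj⟩ := hcover y
  obtain ⟨k, hik, hjk⟩ := directed_of (· ≤ ·) i j
  exact ⟨k, hmono hik hi, hmono hjk hj⟩

theorem centralizer_subset_center_of_monotone (hmono : Monotone hs)
    (hcover : ∀ x : h, ∃ i, x ∈ hs i)
    (houter : ∀ i, ∀ u ∈ hs i, u ≠ 0 →
      (∀ a ∈ ks i, u * a = a * u) → ∀ x ∈ hs i, u * x = x * u) :
    {y : h | ∃ i, y ∈ ks i}.centralizer ⊆ Set.center h := by
  intro u hu
  refine Semigroup.mem_center_iff.2 fun x => ?_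
  obtain ⟨i, hui, hxi⟩ := exists_mem_mem_of_monotone hmono hcover u x
  rcases eq_or_ne u 0 with rfl | hu0
  · simp
  exact (houter i u hui hu0 (fun a ha => (hu a ⟨i, ha⟩).symm) x hxi).symm

variable (hs) in
noncomputable def gluedSMul (hcover : ∀ x : h, ∃ i, x ∈ hs i) (ω : I → G → h → h) (σ : G)
    (x : h) : h :=
  ω (hcover x).choose σ x

theorem gluedSMul_eq (hcover : ∀ x : h, ∃ i, x ∈ hs i)
    (hcompat : ∀ i j, i ≤ j → ∀ (σ : G), ∀ x ∈ hs i, ω j σ x = ω i σ x) {i : I} {x : h}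
    (hx : x ∈ hs i) (σ : G) : gluedSMul hs hcover ω σ x = ω i σ x := by
  obtain ⟨j, hj₁, hj₂⟩ := directed_of (· ≤ ·) (hcover x).choose i
  rw [gluedSMul, ← hcompat _ _ hj₁ σ x (hcover x).choose_spec, hcompat _ _ hj₂ σ x hx]

noncomputable abbrev gluedAction [Group G] (hmono : Monotone hs)
    (hcover : ∀ x : h, ∃ i, x ∈ hs i)
    (hmaps : ∀ i σ, ∀ x ∈ hs i, ω i σ x ∈ hs i)
    (hadd : ∀ i σ, ∀ x ∈ hs i, ∀ y ∈ hs i, ω i σ (x + y) = ω i σ x + ω i σ y)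
    (hmul : ∀ i σ, ∀ x ∈ hs i, ∀ y ∈ hs i, ω i σ (x * y) = ω i σ x * ω i σ y)
    (hone : ∀ i σ, ω i σ 1 = 1)
    (hid : ∀ i, ∀ x ∈ hs i, ω i 1 x = x)
    (hcomp : ∀ i (σ τ : G), ∀ x ∈ hs i, ω i (σ * τ) x = ω i σ (ω i τ x))
    (hcompat : ∀ i j, i ≤ j → ∀ (σ : G), ∀ x ∈ hs i, ω j σ x = ω i σ x) :
    MulSemiringAction G h where
  smul := gluedSMul hs hcover ω
  one_smul x := (gluedSMul_eq hcover hcompat (hcover x).choose_spec 1).trans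
    (hid _ x (hcover x).choose_spec)
  mul_smul σ τ x := by
    obtain ⟨i, hx⟩ := hcover x
    change gluedSMul hs hcover ω _ x = gluedSMul hs hcover ω σ (gluedSMul hs hcover ω τ x)
    rw [gluedSMul_eq hcover hcompat hx, gluedSMul_eq hcover hcompat hx,
      gluedSMul_eq hcover hcompat (hmaps i τ x hx), hcomp i σ τ x hx]
  smul_zero σ := by
    obtain ⟨i, -⟩ := hcover 0
    have h0 := hadd i σ 0 (zero_mem _) 0 (zero_mem _)
    rw [add_zero] at h0
    exact (gluedSMul_eq hcover hcompat (zero_mem _) σ).trans (left_eq_add.1 h0)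
  smul_add σ x y := by
    obtain ⟨i, hx, hy⟩ := exists_mem_mem_of_monotone hmono hcover x y
    change gluedSMul hs hcover ω σ _ = gluedSMul hs hcover ω σ x + gluedSMul hs hcover ω σ y
    rw [gluedSMul_eq hcover hcompat (add_mem hx hy), gluedSMul_eq hcover hcompat hx,
      gluedSMul_eq hcover hcompat hy, hadd i σ x hx y hy]
  smul_one σ := by
    obtain ⟨i, -⟩ := hcover 1
    exact (gluedSMul_eq hcover hcompat (one_mem _) σ).trans (hone i σ)
  smul_mul σ x y := by
    obtain ⟨i, hx, hy⟩ := exists_mem_mem_of_monotone hmono hcover x y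
    change gluedSMul hs hcover ω σ _ = gluedSMul hs hcover ω σ x * gluedSMul hs hcover ω σ y
    rw [gluedSMul_eq hcover hcompat (mul_mem hx hy), gluedSMul_eq hcover hcompat hx,
      gluedSMul_eq hcover hcompat hy, hmul i σ x hx y hy]

end DirectedLimit

theorem directed_limit_outer_galois_general
    (I : Type*) [Preorder I] [IsDirected I (· ≤ ·)]
    (G : Type*) [Group G] [TopologicalSpace G] [IsTopologicalGroup G]
    [CompactSpace G]
    (h : Type*) [DivisionRing h]
    (hs ks : I → Subfield h) (hmono : Monotone hs)
    (hks : ∀ i, ks i ≤ hs i) (hcover : ∀ x : h, ∃ i, x ∈ hs i)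
    (ω : I → G → h → h)
    (hmaps : ∀ i σ, ∀ x ∈ hs i, ω i σ x ∈ hs i)
    (hadd : ∀ i σ, ∀ x ∈ hs i, ∀ y ∈ hs i, ω i σ (x + y) = ω i σ x + ω i σ y)
    (hmul : ∀ i σ, ∀ x ∈ hs i, ∀ y ∈ hs i, ω i σ (x * y) = ω i σ x * ω i σ y)
    (hone : ∀ i σ, ω i σ 1 = 1)
    (hid : ∀ i, ∀ x ∈ hs i, ω i 1 x = x)
    (hcomp : ∀ i (σ τ : G), ∀ x ∈ hs i, ω i (σ * τ) x = ω i σ (ω i τ x))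
    (hfix : ∀ i, ∀ x ∈ hs i, (∀ σ : G, ω i σ x = x) ↔ x ∈ ks i)
    (hcompat : ∀ i j, i ≤ j → ∀ (σ : G), ∀ x ∈ hs i, ω j σ x = ω i σ x)
    (houter : ∀ i, ∀ u ∈ hs i, u ≠ 0 →
      (∀ a ∈ ks i, u * a = a * u) → ∀ x ∈ hs i, u * x = x * u)
    (hopen : ∀ i, ∀ x ∈ hs i, IsOpen {σ : G | ω i σ x = x}) :
    ∃ Ω : G →* (h ≃+* h),
      (∀ (σ : G) i, ∀ x ∈ hs i, Ω σ x = ω i σ x) ∧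
      (∀ x : h, (∀ σ : G, Ω σ x = x) ↔ ∃ i, x ∈ ks i) ∧
      (∀ x : h, IsAlgebraicOverSet {y : h | ∃ i, y ∈ ks i} x) ∧
      (∀ u : h, u ≠ 0 → (∀ a : h, (∃ i, a ∈ ks i) → u * a = a * u) →
        ∀ x : h, u * x = x * u) ∧
      (∀ f : h ≃+* h, (∀ a : h, (∃ i, a ∈ ks i) → f a = a) →
        ∃ σ : G, ∀ x : h, f x = Ω σ x) := by
  let _ : MulSemiringAction G h :=
    gluedAction hmono hcover hmaps hadd hmul hone hid hcomp hcompat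
  have hsmul : ∀ (σ : G) i, ∀ x ∈ hs i, σ • x = ω i σ x :=
    fun σ _ _ hx => gluedSMul_eq hcover hcompat hx σ
  have hfixed := fixedPoints_eq_of_forall_smul_eq hsmul hcover hks hfix
  have hopen' := isOpen_stabilizer_of_forall_smul_eq hsmul hcover hopen
  have hcenter := centralizer_subset_center_of_monotone hmono hcover houter
  refine ⟨MulSemiringAction.toRingAut G h, hsmul, fun x => Set.ext_iff.1 hfixed x,
    fun x => hfixed ▸ isAlgebraicOverSet_fixedPoints hopen' x,
    fun u _ hu x => (Semigroup.mem_center_iff.1 (hcenter fun a ha => (hu a ha).symm) x).symm,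
    fun f hf => ?_⟩
  rw [← hfixed] at hcenter
  exact exists_smul_eq_of_ringHom hopen' hcenter (f := (f : h →+* h))
    fun c hc => hf c (by rwa [hfixed] at hc)

/-- Directed limits of algebraic outer Galois extensions of division rings with constant
profinite Galois group `G`.  The directed systems `(hᵢ)`, `(kᵢ)` and the colimit `h` are
modelled concretely: `h` is a division ring exhausted by subdivision rings `hs i`
(`⋃ᵢ hs i = h`), `ks i ≤ hs i`, and `ω i : G → (hs i → hs i)` gives for each `i` a
faithful action of `G` on `hs i` by ring automorphisms with fixed field `ks i`
(an algebraic outer Galois extension with open stabilizers, i.e. `ωᵢ : G ≅ Gal(hᵢ/kᵢ)` as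
profinite groups), compatibly with the transition maps (inclusions).  Then `h/k`, with
`k = ⋃ᵢ ks i`, is an algebraic outer Galois extension with Galois group `G`, compatibly
with the `ωᵢ`. -/
theorem directed_limit_outer_galois
    (I : Type*) [Preorder I] [IsDirected I (· ≤ ·)] [Nonempty I]
    (G : Type*) [Group G] [TopologicalSpace G] [IsTopologicalGroup G]
    [CompactSpace G] [T2Space G] [TotallyDisconnectedSpace G]
    (h : Type*) [DivisionRing h]
    (hs ks : I → Subfield h) (hmono : Monotone hs) (kmono : Monotone ks)
    (hks : ∀ i, ks i ≤ hs i) (hcover : ∀ x : h, ∃ i, x ∈ hs i)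
    (ω : I → G → h → h)
    (hmaps : ∀ i σ, ∀ x ∈ hs i, ω i σ x ∈ hs i)
    (hadd : ∀ i σ, ∀ x ∈ hs i, ∀ y ∈ hs i, ω i σ (x + y) = ω i σ x + ω i σ y)
    (hmul : ∀ i σ, ∀ x ∈ hs i, ∀ y ∈ hs i, ω i σ (x * y) = ω i σ x * ω i σ y)
    (hone : ∀ i σ, ω i σ 1 = 1)
    (hid : ∀ i, ∀ x ∈ hs i, ω i 1 x = x)
    (hcomp : ∀ i (σ τ : G), ∀ x ∈ hs i, ω i (σ * τ) x = ω i σ (ω i τ x))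
    (hsurj : ∀ i σ, ∀ y ∈ hs i, ∃ x ∈ hs i, ω i σ x = y)
    (hfix : ∀ i, ∀ x ∈ hs i, (∀ σ : G, ω i σ x = x) ↔ x ∈ ks i)
    (hcompat : ∀ i j, i ≤ j → ∀ (σ : G), ∀ x ∈ hs i, ω j σ x = ω i σ x)
    (houter : ∀ i, ∀ u ∈ hs i, u ≠ 0 →
      (∀ a ∈ ks i, u * a = a * u) → ∀ x ∈ hs i, u * x = x * u)
    (halg : ∀ i, ∀ x ∈ hs i, IsAlgebraicOverSet (ks i : Set h) x)
    (hopen : ∀ i, ∀ x ∈ hs i, IsOpen {σ : G | ω i σ x = x})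
    (hfaithful : ∀ σ : G, (∀ i, ∀ x ∈ hs i, ω i σ x = x) → σ = 1) :
    ∃ Ω : G →* (h ≃+* h),
      (∀ (σ : G) i, ∀ x ∈ hs i, Ω σ x = ω i σ x) ∧
      (∀ x : h, (∀ σ : G, Ω σ x = x) ↔ ∃ i, x ∈ ks i) ∧
      (∀ x : h, IsAlgebraicOverSet {y : h | ∃ i, y ∈ ks i} x) ∧
      (∀ u : h, u ≠ 0 → (∀ a : h, (∃ i, a ∈ ks i) → u * a = a * u) →
        ∀ x : h, u * x = x * u) ∧
      (∀ f : h ≃+* h, (∀ a : h, (∃ i, a ∈ ks i) → f a = a) →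
        ∃ σ : G, ∀ x : h, f x = Ω σ x) :=
  directed_limit_outer_galois_general I G h hs ks hmono hks hcover ω hmaps hadd hmul hone hid hcomp
    hfix hcompat houter hopen
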